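/- arXiv:0904.0529 — 7 statements merged into one kernel-verified Lean document; each statement's English description precedes it below -/
import Mathlib

section
/- Let L be a free abelian group with a symmetric bilinear form, K ∈ L, χ(D) = 1 + (1/2)(D.D - K.D), and E_1, ..., E_n ∈ L with χ(E_j - E_i) = 0 for all i > j. Define A_i = E_{i+1} - E_i for 1 ≤ i < n and A_n = -K - (A_1 + ... + A_{n-1}). Then A_i . A_{i+1} = 1 for 1 ≤ i < n, and A_n . A_1 = 1. -/
/-!
Writing `χ(D) = 1 + (D.D - K.D)/2`, symmetry of the form gives
`χ(a + b) = χ(a) + χ(b) - 1 + a.b`, so three vanishing values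
`χ(-x) = χ(-y) = χ(-(x + y)) = 0` force `x.y = 1`; since moreover
`χ(-y) = 0` reads `y.y + K.y = -2`, also `y.(-K - x - y) = 2 - x.y = 1`.
Applied to `x = A_i`, `y = A_{i+1}` this gives the inner pairings. The sum of `A_1, …, A_{n-1}`
telescopes to `E_n - E_1`, so `A_n = -K - (E_n - E_1)`, and splitting `E_n - E_1` at `E_2` or
at `E_{n-1}` gives the two pairings involving `A_n`.
-/

open Finset

def eulerChar {L : Type*} [AddCommGroup L] (B : L →+ L →+ ℚ) (K D : L) : ℚ :=
  1 + (B D D - B K D) / 2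

section

variable {L : Type*} [AddCommGroup L] {B : L →+ L →+ ℚ} {K : L}

theorem eulerChar_add (hsym : ∀ x y, B x y = B y x) (x y : L) :
    eulerChar B K (x + y) = eulerChar B K x + eulerChar B K y - 1 + B x y := by
  simp only [eulerChar, map_add, AddMonoidHom.add_apply, hsym y x]
  ring

theorem pairing_eq_one_of_eulerChar_neg (hsym : ∀ x y, B x y = B y x) {x y : L}
    (hx : eulerChar B K (-x) = 0) (hy : eulerChar B K (-y) = 0)
    (hxy : eulerChar B K (-(x + y)) = 0) : B x y = 1 := by
  rw [neg_add, eulerChar_add hsym, hx, hy] at hxy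
  simp only [map_neg, AddMonoidHom.neg_apply, neg_neg] at hxy
  linarith

theorem pairing_neg_sub_add_eq_one (hsym : ∀ x y, B x y = B y x) {x y : L}
    (hx : eulerChar B K (-x) = 0) (hy : eulerChar B K (-y) = 0)
    (hxy : eulerChar B K (-(x + y)) = 0) : B y (-K - (x + y)) = 1 := by
  have hxy' := pairing_eq_one_of_eulerChar_neg hsym hx hy hxy
  simp only [eulerChar, map_neg, AddMonoidHom.neg_apply, neg_neg] at hy
  simp only [map_sub, map_add, map_neg, hsym y x, hsym y K, hxy']
  linarith

end

theorem toric_system_adjacent_pairing_general (L : Type*) [AddCommGroup L]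
    (B : L →+ L →+ ℚ) (hsym : ∀ x y, B x y = B y x) (K : L)
    (χ : L → ℚ) (hχ : ∀ D, χ D = 1 + (B D D - B K D) / 2)
    (n : ℕ) (hn : 3 ≤ n) (E A : ℕ → L)
    (hE : ∀ i j, 1 ≤ j → j < i → i ≤ n → χ (E j - E i) = 0)
    (hA : ∀ i, 1 ≤ i → i < n → A i = E (i + 1) - E i)
    (hAn : A n = -K - ∑ i ∈ Finset.Ico 1 n, A i) :
    (∀ i, 1 ≤ i → i < n → B (A i) (A (i + 1)) = 1) ∧ B (A n) (A 1) = 1 := by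
  obtain rfl : χ = eulerChar B K := funext hχ
  have hE' : ∀ i j, 1 ≤ j → j < i → i ≤ n → eulerChar B K (-(E i - E j)) = 0 := by
    simpa only [neg_sub] using hE
  have hAn' : A n = -K - (E n - E 1) := by
    rw [hAn, ← sum_Ico_sub E (by omega : 1 ≤ n)]
    exact congrArg _ (sum_congr rfl fun i hi => hA i (mem_Ico.mp hi).1 (mem_Ico.mp hi).2)
  refine ⟨fun i hi hin => ?_, ?_⟩
  · rcases (Nat.succ_le_of_lt hin).lt_or_eq with hlt | rfl
    · rw [hA i hi hin, hA (i + 1) (by omega) hlt]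
      refine pairing_eq_one_of_eulerChar_neg hsym (hE' (i + 1) i hi (by omega) (by omega))
        (hE' (i + 1 + 1) (i + 1) (by omega) (by omega) (by omega)) ?_
      rw [add_comm, sub_add_sub_cancel]
      exact hE' (i + 1 + 1) i hi (by omega) (by omega)
    · rw [hA i hi hin, hAn', ← sub_add_sub_cancel (E (i + 1)) (E i) (E 1),
        add_comm (E (i + 1) - E i)]
      refine pairing_neg_sub_add_eq_one hsym (hE' i 1 le_rfl (by omega) (by omega))
        (hE' (i + 1) i hi (by omega) le_rfl) ?_
      rw [add_comm, sub_add_sub_cancel]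
      exact hE' (i + 1) 1 le_rfl (by omega) le_rfl
  · rw [hAn', hA 1 le_rfl (by omega), hsym, ← sub_add_sub_cancel (E n) (E 2) (E 1)]
    refine pairing_neg_sub_add_eq_one hsym (hE' n 2 (by omega) (by omega) le_rfl)
      (hE' 2 1 le_rfl (by omega) (by omega)) ?_
    rw [sub_add_sub_cancel]
    exact hE' n 1 le_rfl (by omega) le_rfl

/-- From an exceptional-sequence condition χ(E_j - E_i) = 0 for i > j,
the differences A_i = E_{i+1} - E_i (1 ≤ i < n) and A_n = -K - Σ A_i satisfy
A_i . A_{i+1} = 1 for 1 ≤ i < n and A_n . A_1 = 1. -/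
theorem toric_system_adjacent_pairing (L : Type*) [AddCommGroup L] [Module.Free ℤ L]
    (B : L →+ L →+ ℚ) (hsym : ∀ x y, B x y = B y x) (K : L)
    (χ : L → ℚ) (hχ : ∀ D, χ D = 1 + (B D D - B K D) / 2)
    (n : ℕ) (hn : 3 ≤ n) (E A : ℕ → L)
    (hE : ∀ i j, 1 ≤ j → j < i → i ≤ n → χ (E j - E i) = 0)
    (hA : ∀ i, 1 ≤ i → i < n → A i = E (i + 1) - E i)
    (hAn : A n = -K - ∑ i ∈ Finset.Ico 1 n, A i) :
    (∀ i, 1 ≤ i → i < n → B (A i) (A (i + 1)) = 1) ∧ B (A n) (A 1) = 1 :=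
  toric_system_adjacent_pairing_general L B hsym K χ hχ n hn E A hE hA hAn
end

section
/- Let L be a free abelian group with a symmetric bilinear form, K ∈ L, χ(D) = 1 + (1/2)(D.D - K.D), and E_1, ..., E_n ∈ L with χ(E_j - E_i) = 0 for all i > j. Define A_i = E_{i+1} - E_i for 1 ≤ i < n and A_n = -K - (A_1 + ... + A_{n-1}). Then A_i . A_j = 0 whenever 1 ≤ i < j ≤ n and (i,j) is not of the form (k, k+1) and not (1, n). -/
/-!
Writing `χ(x - y) = 0` out gives `2 (x.y) = φ x + ψ y + 2` with `φ x = x.x - K.x` and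
`ψ y = y.y + K.y`. A pairing of this "additively separated" shape is killed by the mixed second
difference, so `(E_{i+1} - E_i).(E_{j+1} - E_j) = 0` as soon as `i + 1 < j`. For `j = n` the sum
telescopes to `A_n = -K - (E_n - E_1)`, and the same expansion leaves `(E_{i+1} - E_i).K`
twice with opposite signs.
-/

section ExceptionalPairs

variable {L : Type*} [AddCommGroup L] (B : L →+ L →+ ℚ) (K : L) {χ : L → ℚ}

theorem two_mul_apply_of_chi_sub_eq_zero (hχ : ∀ D, χ D = 1 + (B D D - B K D) / 2)
    (hsym : ∀ x y, B x y = B y x) {x y : L}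
    (h : χ (x - y) = 0) : 2 * B x y = (B x x - B K x) + (B y y + B K y) + 2 := by
  rw [hχ] at h
  simp only [map_sub, AddMonoidHom.sub_apply] at h
  linarith [hsym x y]

theorem apply_sub_sub_eq_zero_of_chi_sub_eq_zero (hχ : ∀ D, χ D = 1 + (B D D - B K D) / 2)
    (hsym : ∀ x y, B x y = B y x)
    {x x' y y' : L} (h₁ : χ (x - y) = 0) (h₂ : χ (x - y') = 0) (h₃ : χ (x' - y) = 0)
    (h₄ : χ (x' - y') = 0) : B (x' - x) (y' - y) = 0 := by
  have e₁ := two_mul_apply_of_chi_sub_eq_zero B K hχ hsym h₁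
  have e₂ := two_mul_apply_of_chi_sub_eq_zero B K hχ hsym h₂
  have e₃ := two_mul_apply_of_chi_sub_eq_zero B K hχ hsym h₃
  have e₄ := two_mul_apply_of_chi_sub_eq_zero B K hχ hsym h₄
  simp only [map_sub, AddMonoidHom.sub_apply]
  linarith

theorem apply_neg_sub_sub_eq_zero_of_chi_sub_eq_zero (hχ : ∀ D, χ D = 1 + (B D D - B K D) / 2)
    (hsym : ∀ x y, B x y = B y x)
    {x x' y z : L} (h₁ : χ (y - x) = 0) (h₂ : χ (y - x') = 0) (h₃ : χ (x - z) = 0)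
    (h₄ : χ (x' - z) = 0) : B (x' - x) (-K - (z - y)) = 0 := by
  have e₁ := two_mul_apply_of_chi_sub_eq_zero B K hχ hsym h₁
  have e₂ := two_mul_apply_of_chi_sub_eq_zero B K hχ hsym h₂
  have e₃ := two_mul_apply_of_chi_sub_eq_zero B K hχ hsym h₃
  have e₄ := two_mul_apply_of_chi_sub_eq_zero B K hχ hsym h₄
  simp only [map_sub, map_neg, AddMonoidHom.sub_apply]
  linarith [hsym x K, hsym x' K, hsym x y, hsym x' y]

end ExceptionalPairs

theorem toric_system_orthogonality_general (L : Type*) [AddCommGroup L]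
    (B : L →+ L →+ ℚ) (hsym : ∀ x y, B x y = B y x) (K : L)
    (χ : L → ℚ) (hχ : ∀ D, χ D = 1 + (B D D - B K D) / 2)
    (n : ℕ) (E A : ℕ → L)
    (hE : ∀ i j, 1 ≤ j → j < i → i ≤ n → χ (E j - E i) = 0)
    (hA : ∀ i, 1 ≤ i → i < n → A i = E (i + 1) - E i)
    (hAn : A n = -K - ∑ i ∈ Finset.Ico 1 n, A i) :
    ∀ i j, 1 ≤ i → i < j → j ≤ n → j ≠ i + 1 → ¬(i = 1 ∧ j = n) →
      B (A i) (A j) = 0 := by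
  intro i j hi hij hjn hadj hcorner
  have hχE : ∀ a b, 1 ≤ a → a < b → b ≤ n → χ (E a - E b) = 0 :=
    fun a b ha hab hb => hE b a ha hab hb
  rcases hjn.lt_or_eq with hjn | rfl
  · rw [hA i hi (by omega), hA j (by omega) hjn]
    exact apply_sub_sub_eq_zero_of_chi_sub_eq_zero B K hχ hsym
      (hχE _ _ hi (by omega) (by omega)) (hχE _ _ hi (by omega) (by omega))
      (hχE _ _ (by omega) (by omega) (by omega)) (hχE _ _ (by omega) (by omega) (by omega))
  · have htelescope : ∑ m ∈ Finset.Ico 1 j, A m = E j - E 1 := by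
      rw [Finset.sum_congr rfl fun m hm =>
        hA m (Finset.mem_Ico.mp hm).1 (Finset.mem_Ico.mp hm).2]
      exact Finset.sum_Ico_sub E (by omega)
    rw [hAn, htelescope, hA i hi (by omega)]
    exact apply_neg_sub_sub_eq_zero_of_chi_sub_eq_zero B K hχ hsym
      (hχE _ _ le_rfl (by omega) (by omega)) (hχE _ _ le_rfl (by omega) (by omega))
      (hχE _ _ hi (by omega) le_rfl) (hχE _ _ (by omega) (by omega) le_rfl)

/-- With A_i as differences of an exceptional sequence and
A_n = -K - Σ A_i, non-cyclically-adjacent pairs are orthogonal: A_i . A_j = 0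
for 1 ≤ i < j ≤ n with j ≠ i + 1 and (i,j) ≠ (1,n). -/
theorem toric_system_orthogonality (L : Type*) [AddCommGroup L] [Module.Free ℤ L]
    (B : L →+ L →+ ℚ) (hsym : ∀ x y, B x y = B y x) (K : L)
    (χ : L → ℚ) (hχ : ∀ D, χ D = 1 + (B D D - B K D) / 2)
    (n : ℕ) (hn : 3 ≤ n) (E A : ℕ → L)
    (hE : ∀ i j, 1 ≤ j → j < i → i ≤ n → χ (E j - E i) = 0)
    (hA : ∀ i, 1 ≤ i → i < n → A i = E (i + 1) - E i)
    (hAn : A n = -K - ∑ i ∈ Finset.Ico 1 n, A i) :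
    ∀ i j, 1 ≤ i → i < j → j ≤ n → j ≠ i + 1 → ¬(i = 1 ∧ j = n) →
      B (A i) (A j) = 0 :=
  toric_system_orthogonality_general L B hsym K χ hχ n E A hE hA hAn
end

section
/- Let L be a free abelian group with a symmetric bilinear form, K ∈ L. If A_1, ..., A_n ∈ L form a toric system (A_i . A_{i+1} = 1 cyclically, A_i . A_j = 0 for non-cyclically-adjacent distinct i, j, and A_1 + ... + A_n = -K), and χ(D) = 1 + (1/2)(D.D - K.D), then setting E_1 = 0 and E_{j} = A_1 + ... + A_{j-1} for 2 ≤ j ≤ n, we have χ(E_j - E_i) = 0 for all i > j. -/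
/-! With `S = A j + ⋯ + A (i - 1)` we have `E j - E i = -S`, so `χ (E j - E i) = 1 + (S.S + K.S) / 2`.
Consecutive classes meet once and the others not at all, so `S.S = ∑ (A k).(A k) + 2 (i - j - 1)`;
each `A k` has exactly two cyclic neighbours, so `-K.(A k) = (A k).(A k) + 2` and
`K.S = -∑ (A k).(A k) - 2 (i - j)`. Hence `S.S + K.S = -2`. -/

open Finset

theorem Finset.sum_eq_add_add {ι M : Type*} [DecidableEq ι] [AddCommMonoid M] {s : Finset ι}
    {f : ι → M} {a b c : ι} (ha : a ∈ s) (hb : b ∈ s) (hc : c ∈ s) (hab : a ≠ b) (hac : a ≠ c)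
    (hbc : b ≠ c) (h₀ : ∀ x ∈ s, x ≠ a → x ≠ b → x ≠ c → f x = 0) :
    ∑ x ∈ s, f x = f a + f b + f c := by
  have hsub : {a, b, c} ⊆ s := insert_subset ha (insert_subset hb (singleton_subset_iff.2 hc))
  rw [← sum_subset hsub fun x hx hx' => by
    simp only [mem_insert, mem_singleton, not_or] at hx'
    exact h₀ x hx hx'.1 hx'.2.1 hx'.2.2]
  simp [sum_insert, hab, hac, hbc, add_assoc]

-- The intersection pattern of a toric system `A 1, …, A n`, without the condition `∑ A i = -K`.
structure IsCyclicChain {L R : Type*} [AddCommGroup L] [CommRing R] (B : L →+ L →+ R) (n : ℕ)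
    (A : ℕ → L) : Prop where
  apply_succ : ∀ i, 1 ≤ i → i < n → B (A i) (A (i + 1)) = 1
  apply_last_first : B (A n) (A 1) = 1
  apply_eq_zero : ∀ i j, 1 ≤ i → i < j → j ≤ n → j ≠ i + 1 → ¬(i = 1 ∧ j = n) →
    B (A i) (A j) = 0

namespace IsCyclicChain

variable {L R : Type*} [AddCommGroup L] [CommRing R] {B : L →+ L →+ R} {n : ℕ} {A : ℕ → L}
  (hA : IsCyclicChain B n A) (hsym : ∀ x y, B x y = B y x)
include hA

theorem apply_pred {l : ℕ} (hl : 1 < l) (hln : l ≤ n) : B (A (l - 1)) (A l) = 1 := by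
  simpa [Nat.sub_add_cancel hl.le] using hA.apply_succ (l - 1) (by omega) (by omega)

theorem sum_Ico_apply {j m : ℕ} (hj : 1 ≤ j) (hjm : j < m) (hmn : m < n) :
    B (∑ k ∈ Ico j m, A k) (A m) = 1 := by
  obtain ⟨m, rfl⟩ : ∃ m', m = m' + 1 := ⟨m - 1, by omega⟩
  have hfar : ∑ k ∈ Ico j m, B (A k) (A (m + 1)) = 0 :=
    sum_eq_zero fun k hk => by
      have hk := mem_Ico.1 hk
      exact hA.apply_eq_zero k (m + 1) (by omega) (by omega) (by omega) (by omega) (by omega)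
  rw [sum_Ico_succ_top (by omega), map_add, AddMonoidHom.add_apply, map_sum,
    AddMonoidHom.finsetSum_apply, hfar, hA.apply_succ m (by omega) (by omega), zero_add]

include hsym

theorem apply_succ_swap {l : ℕ} (hl : 1 ≤ l) (hln : l < n) : B (A (l + 1)) (A l) = 1 := by
  rw [hsym]; exact hA.apply_succ l hl hln

theorem apply_eq_zero_of_not_adj {k l : ℕ} (hk : 1 ≤ k ∧ k ≤ n) (hl : 1 ≤ l ∧ l ≤ n)
    (hkl : k ≠ l)
    (hnadj : ¬(l = k + 1 ∨ k = l + 1 ∨ (k = 1 ∧ l = n) ∨ (l = 1 ∧ k = n))) :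
    B (A k) (A l) = 0 := by
  rcases hkl.lt_or_gt with h | h
  · exact hA.apply_eq_zero k l hk.1 h hl.2 (by omega) (by omega)
  · rw [hsym]; exact hA.apply_eq_zero l k hl.1 h hk.2 (by omega) (by omega)

theorem sum_apply_right (hn : 3 ≤ n) {l : ℕ} (hl : 1 ≤ l) (hln : l ≤ n) :
    ∑ k ∈ Icc 1 n, B (A k) (A l) = B (A l) (A l) + 2 := by
  have hrow : ∀ p q, 1 ≤ p ∧ p ≤ n → 1 ≤ q ∧ q ≤ n → p ≠ l → q ≠ l → p ≠ q →
      (∀ k, 1 ≤ k → k ≤ n → k ≠ p → k ≠ q →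
        ¬(l = k + 1 ∨ k = l + 1 ∨ (k = 1 ∧ l = n) ∨ (l = 1 ∧ k = n))) →
      ∑ k ∈ Icc 1 n, B (A k) (A l) = B (A l) (A l) + B (A p) (A l) + B (A q) (A l) := by
    intro p q hp hq hpl hql hpq hnadj
    refine sum_eq_add_add (by simp; omega) (by simp; omega) (by simp; omega) hpl.symm hql.symm hpq
      fun k hk hkl hkp hkq => ?_
    have hk := mem_Icc.1 hk
    exact hA.apply_eq_zero_of_not_adj hsym hk ⟨hl, hln⟩ hkl (hnadj k hk.1 hk.2 hkp hkq)
  -- `3 ≤ n` makes the two cyclic neighbours of `l` distinct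
  rcases (show l = 1 ∨ 1 < l ∧ l < n ∨ l = n by omega) with rfl | ⟨hl1, hln'⟩ | rfl
  · rw [hrow 2 n (by omega) (by omega) (by omega) (by omega) (by omega) (by omega),
      hA.apply_succ_swap hsym le_rfl (by omega), hA.apply_last_first]
    ring
  · rw [hrow (l - 1) (l + 1) (by omega) (by omega) (by omega) (by omega) (by omega) (by omega),
      hA.apply_pred hl1 hln, hA.apply_succ_swap hsym hl hln']
    ring
  · rw [hrow (l - 1) 1 (by omega) (by omega) (by omega) (by omega) (by omega) (by omega),
      hA.apply_pred (by omega) hln, hsym (A 1), hA.apply_last_first]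
    ring

theorem apply_sum_Ico_self {j i : ℕ} (hj : 1 ≤ j) (hji : j < i) (hin : i ≤ n) :
    B (∑ k ∈ Ico j i, A k) (∑ k ∈ Ico j i, A k) + 2 =
      ∑ k ∈ Ico j i, B (A k) (A k) + 2 * ((i : R) - j) := by
  induction i, hji using Nat.le_induction with
  | base => simp
  | succ m hjm ih =>
    have hSm := hA.sum_Ico_apply hj hjm (by omega)
    rw [sum_Ico_succ_top (by omega), sum_Ico_succ_top (by omega)]
    simp only [map_add, AddMonoidHom.add_apply]
    rw [hsym (A m), hSm]
    push_cast
    linear_combination ih (by omega)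

theorem sum_Icc_apply_sum_Ico (hn : 3 ≤ n) {j i : ℕ} (hj : 1 ≤ j) (hji : j ≤ i) (hin : i ≤ n) :
    B (∑ k ∈ Icc 1 n, A k) (∑ k ∈ Ico j i, A k) =
      ∑ k ∈ Ico j i, B (A k) (A k) + 2 * ((i : R) - j) := by
  have hcol : ∀ l ∈ Ico j i, B (∑ k ∈ Icc 1 n, A k) (A l) = B (A l) (A l) + 2 := fun l hl => by
    have hl := mem_Ico.1 hl
    rw [map_sum, AddMonoidHom.finsetSum_apply, hA.sum_apply_right hsym hn (by omega) (by omega)]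
  rw [map_sum, sum_congr rfl hcol, sum_add_distrib, sum_const, Nat.card_Ico, nsmul_eq_mul,
    Nat.cast_sub hji]
  ring

end IsCyclicChain

theorem toric_system_gives_exceptional_general (L : Type*) [AddCommGroup L]
    (B : L →+ L →+ ℚ) (hsym : ∀ x y, B x y = B y x) (K : L)
    (χ : L → ℚ) (hχ : ∀ D, χ D = 1 + (B D D - B K D) / 2)
    (n : ℕ) (hn : 3 ≤ n) (A : ℕ → L)
    (hadj : ∀ i, 1 ≤ i → i < n → B (A i) (A (i + 1)) = 1)
    (hadjn : B (A n) (A 1) = 1)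
    (horth : ∀ i j, 1 ≤ i → i < j → j ≤ n → j ≠ i + 1 → ¬(i = 1 ∧ j = n) →
      B (A i) (A j) = 0)
    (hsum : ∑ i ∈ Finset.Icc 1 n, A i = -K)
    (E : ℕ → L) (hEdef : ∀ j, E j = ∑ k ∈ Finset.Ico 1 j, A k) :
    ∀ i j, 1 ≤ j → j < i → i ≤ n → χ (E j - E i) = 0 := by
  intro i j hj hji hin
  have hA : IsCyclicChain B n A := ⟨hadj, hadjn, horth⟩
  have hE : E j - E i = -∑ k ∈ Ico j i, A k := by
    rw [hEdef, hEdef, ← sum_Ico_consecutive A hj hji.le]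
    abel
  have hK : K = -∑ k ∈ Icc 1 n, A k := by rw [hsum, neg_neg]
  rw [hχ, hE, hK]
  simp only [map_neg, AddMonoidHom.neg_apply, neg_neg]
  linear_combination (hA.apply_sum_Ico_self hsym hj hji hin -
    hA.sum_Icc_apply_sum_Ico hsym hn hj hji.le hin) / 2

/-- A toric system A_1, ..., A_n gives rise, via E_1 = 0 and
E_j = A_1 + ... + A_{j-1}, to divisors with χ(E_j - E_i) = 0 for all i > j. -/
theorem toric_system_gives_exceptional (L : Type*) [AddCommGroup L] [Module.Free ℤ L]
    (B : L →+ L →+ ℚ) (hsym : ∀ x y, B x y = B y x) (K : L)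
    (χ : L → ℚ) (hχ : ∀ D, χ D = 1 + (B D D - B K D) / 2)
    (n : ℕ) (hn : 3 ≤ n) (A : ℕ → L)
    (hadj : ∀ i, 1 ≤ i → i < n → B (A i) (A (i + 1)) = 1)
    (hadjn : B (A n) (A 1) = 1)
    (horth : ∀ i j, 1 ≤ i → i < j → j ≤ n → j ≠ i + 1 → ¬(i = 1 ∧ j = n) →
      B (A i) (A j) = 0)
    (hsum : ∑ i ∈ Finset.Icc 1 n, A i = -K)
    (E : ℕ → L) (hEdef : ∀ j, E j = ∑ k ∈ Finset.Ico 1 j, A k) :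
    ∀ i j, 1 ≤ j → j < i → i ≤ n → χ (E j - E i) = 0 :=
  toric_system_gives_exceptional_general L B hsym K χ hχ n hn A hadj hadjn horth hsum E hEdef
end

section
/- In the lattice ℤ^{2+t} with basis P, Q, R_1, ..., R_t, bilinear form P² = 0, Q² = a, P.Q = 1, R_i² = -1, all other products of distinct basis elements 0, and canonical class K = (a-2)P - 2Q + ΣR_i, for 0 ≤ r ≤ t the tuple (R_r, R_{r-1} - R_r, ..., R_1 - R_2, P - R_1, sP + Q, P - R_{r+1}, R_{r+1} - R_{r+2}, ..., R_{t-1} - R_t, R_t, -(a+s)P + Q - Σ_{i=1}^t R_i) is a toric system. -/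
/-!
If `(D₁, …, Dₙ)` is a toric system for `κ` and `E` is orthogonal to every `Dᵢ` with
`E² = -1` (the exceptional curve of the blow-up of the torus-fixed point `Dᵢ ∩ Dᵢ₊₁`), then
`(…, Dᵢ - E, E, Dᵢ₊₁ - E, …)` is a toric system for `κ + E`. The tuple of the theorem arises
from the toric system `(P, sP + Q, P, -(a + s)P + Q)` of the Hirzebruch surface `F_a` by
augmenting with `R₁, …, R_r` between the last and the first element, and then with
`R_{r+1}, …, R_t` between the penultimate and the last one; `R_{t+1}` is orthogonal to
everything built from `P, Q, R₁, …, R_t`.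
-/

namespace Stmt8

/-- Basis vectors of ℤ^{2+t} as finitely supported sequences:
index 0 is P, index 1 is Q, index i+1 is R_i for 1 ≤ i ≤ t. -/
def e (i : ℕ) : ℕ → ℤ := fun j => if j = i then 1 else 0

def P : ℕ → ℤ := e 0
def Q : ℕ → ℤ := e 1
def R (i : ℕ) : ℕ → ℤ := e (i + 1)

/-- The intersection form: P² = 0, Q² = a, P.Q = 1, R_i² = -1, other
products of distinct basis vectors 0. -/
def form (a : ℤ) (t : ℕ) (x y : ℕ → ℤ) : ℤ :=
  x 0 * y 1 + x 1 * y 0 + a * x 1 * y 1 - ∑ i ∈ Finset.Icc 2 (t + 1), x i * y i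

/-- The canonical class K = (a-2)P - 2Q + R_1 + ... + R_t. -/
def K (a : ℤ) (t : ℕ) : ℕ → ℤ :=
  (a - 2) • P + (-2 : ℤ) • Q + ∑ i ∈ Finset.Icc 1 t, R i

/-- The tuple (R_r, R_{r-1} - R_r, ..., R_1 - R_2, P - R_1, sP + Q,
P - R_{r+1}, R_{r+1} - R_{r+2}, ..., R_{t-1} - R_t, R_t,
-(a+s)P + Q - Σ_{i=1}^t R_i), indexed by k = 1, ..., t + 4
(degenerate blocks collapse to P for r = 0 resp. r = t). -/
def A (a s : ℤ) (t r : ℕ) (k : ℕ) : ℕ → ℤ :=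
  if k = t + 4 then (-(a + s)) • P + Q - ∑ i ∈ Finset.Icc 1 t, R i
  else if k = r + 2 then s • P + Q
  else if k < r + 2 then
    (if r = 0 then P
     else if k = 1 then R r
     else if k ≤ r then R (r - k + 1) - R (r - k + 2)
     else P - R 1)
  else
    (if r = t then P
     else if k = r + 3 then P - R (r + 1)
     else if k ≤ t + 2 then R (k - 3) - R (k - 2)
     else R t)

open Finset
open LinearMap (BilinForm)

theorem sum_Icc_one_eq_sum_range {M : Type*} [AddCommMonoid M] (f : ℕ → M) (n : ℕ) :
    ∑ k ∈ Icc 1 n, f k = ∑ k ∈ range n, f (k + 1) := by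
  rw [← Ico_add_one_right_eq_Icc, sum_Ico_eq_sum_range]
  simp [add_comm]

section ToricSystem

variable {S V : Type*} [CommRing S] [AddCommGroup V] [Module S V]

structure IsToricSystem (B : BilinForm S V) (κ : V) (n : ℕ) (D : ℕ → V) : Prop where
  adjacent : ∀ k, 1 ≤ k → k < n → B (D k) (D (k + 1)) = 1
  wrap : B (D n) (D 1) = 1
  orthogonal : ∀ k l, 1 ≤ k → k < l → l ≤ n → l ≠ k + 1 → ¬(k = 1 ∧ l = n) →
    B (D k) (D l) = 0
  sum_eq : ∑ k ∈ Icc 1 n, D k = -κ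

theorem IsToricSystem.congr {B B' : BilinForm S V} {κ : V} {n : ℕ} {D D' : ℕ → V}
    (h : IsToricSystem B κ n D) (hn : 1 ≤ n) (hD : ∀ k, 1 ≤ k → k ≤ n → D k = D' k)
    (hB : ∀ k l, 1 ≤ k → k ≤ n → 1 ≤ l → l ≤ n → B' (D k) (D l) = B (D k) (D l)) :
    IsToricSystem B' κ n D' where
  adjacent k hk hkn := by
    rw [← hD k hk hkn.le, ← hD (k + 1) (by omega) hkn, hB _ _ hk hkn.le (by omega) hkn]
    exact h.adjacent k hk hkn
  wrap := by
    rw [← hD n hn le_rfl, ← hD 1 le_rfl hn, hB _ _ hn le_rfl le_rfl hn]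
    exact h.wrap
  orthogonal k l hk hkl hln hadj hwrap := by
    rw [← hD k hk (by omega), ← hD l (by omega) hln, hB _ _ hk (by omega) (by omega) hln]
    exact h.orthogonal k l hk hkl hln hadj hwrap
  sum_eq := by
    rw [← h.sum_eq]
    exact sum_congr rfl fun k hk => (hD k (mem_Icc.1 hk).1 (mem_Icc.1 hk).2).symm

-- `(E, D₁ - E, D₂, …, Dₙ₋₁, Dₙ - E)`: the blow-up of `Dₙ ∩ D₁`, listed with `E` first.
def augmentFirst (D : ℕ → V) (n : ℕ) (E : V) (k : ℕ) : V :=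
  if k = 1 then E else if k = 2 then D 1 - E else if k = n + 1 then D n - E else D (k - 1)

-- `(D₁, …, Dₙ₋₂, Dₙ₋₁ - E, E, Dₙ - E)`: the blow-up of `Dₙ₋₁ ∩ Dₙ`.
def augmentPenultimate (D : ℕ → V) (n : ℕ) (E : V) (k : ℕ) : V :=
  if k = n - 1 then D (n - 1) - E else if k = n then E else if k = n + 1 then D n - E else D k

section AugmentFirst

variable (D : ℕ → V) {n : ℕ} (E : V)

@[simp] theorem augmentFirst_one : augmentFirst D n E 1 = E := rfl

@[simp] theorem augmentFirst_two : augmentFirst D n E 2 = D 1 - E := rfl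

theorem augmentFirst_last (hn : 2 ≤ n) : augmentFirst D n E (n + 1) = D n - E := by
  simp only [augmentFirst]; split_ifs <;> first | rfl | omega

theorem augmentFirst_of_le {k : ℕ} (hk : 3 ≤ k) (hkn : k ≤ n) :
    augmentFirst D n E k = D (k - 1) := by
  simp only [augmentFirst]; split_ifs <;> first | rfl | omega

theorem sum_augmentFirst (hn : 3 ≤ n) :
    ∑ k ∈ Icc 1 (n + 1), augmentFirst D n E k = ∑ k ∈ Icc 1 n, D k - E := by
  obtain ⟨m, rfl⟩ : ∃ m, n = m + 3 := ⟨n - 3, by omega⟩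
  have hmid : ∀ k ∈ range m, augmentFirst D (m + 3) E (k + 1 + 1 + 1 + 1) = D (k + 1 + 1 + 1) :=
    fun k hk => augmentFirst_of_le D E (by omega) (by rw [mem_range] at hk; omega)
  conv_lhs =>
    rw [sum_Icc_one_eq_sum_range, sum_range_succ, sum_range_succ', sum_range_succ',
      sum_range_succ', sum_congr rfl hmid, augmentFirst_last D E (by omega)]
  conv_rhs => rw [sum_Icc_one_eq_sum_range, sum_range_succ, sum_range_succ', sum_range_succ']
  simp only [zero_add, Nat.reduceAdd, augmentFirst_one, augmentFirst_two,
    augmentFirst_of_le D E le_rfl (show 3 ≤ m + 3 by omega)]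
  abel

end AugmentFirst

variable {B : BilinForm S V} {κ E : V} {n : ℕ} {D : ℕ → V}

theorem IsToricSystem.augmentFirst (h : IsToricSystem B κ n D) (hB : B.IsSymm) (hn : 3 ≤ n)
    (hE : ∀ k, 1 ≤ k → k ≤ n → B (D k) E = 0) (hEE : B E E = -1) :
    IsToricSystem B (κ + E) (n + 1) (augmentFirst D n E) := by
  have hE' : ∀ k, 1 ≤ k → k ≤ n → B E (D k) = 0 := fun k hk hkn => by
    rw [hB.eq, hE k hk hkn]
  refine ⟨fun k hk hkn => ?_, ?_, fun k l hk hkl hln hadj hwrap => ?_, ?_⟩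
  · obtain rfl | rfl | hk3 | rfl : k = 1 ∨ k = 2 ∨ (3 ≤ k ∧ k < n) ∨ k = n := by omega
    · simp [hE' 1 le_rfl (by omega), hEE]
    · rw [augmentFirst_two, augmentFirst_of_le D E le_rfl hn, map_sub, LinearMap.sub_apply,
        h.adjacent 1 le_rfl (by omega), hE' 2 (by omega) (by omega), sub_zero]
    · rw [augmentFirst_of_le D E hk3.1 (by omega), augmentFirst_of_le D E (by omega) hk3.2,
        show k + 1 - 1 = k - 1 + 1 by omega]
      exact h.adjacent (k - 1) (by omega) (by omega)
    · rw [augmentFirst_of_le D E hn le_rfl, augmentFirst_last D E (by omega), map_sub,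
        hE (k - 1) (by omega) (by omega), sub_zero]
      simpa [Nat.sub_add_cancel (show 1 ≤ k by omega)] using
        h.adjacent (k - 1) (by omega) (by omega)
  · rw [augmentFirst_last D E (by omega), augmentFirst_one, LinearMap.map_sub₂,
      hE n (by omega) le_rfl, hEE]
    ring
  · obtain rfl | rfl | hk3 : k = 1 ∨ k = 2 ∨ 3 ≤ k := by omega
    · rw [augmentFirst_one, augmentFirst_of_le D E (by omega) (by omega),
        hE' _ (by omega) (by omega)]
    · obtain hl | rfl : l ≤ n ∨ l = n + 1 := by omega
      · rw [augmentFirst_two, augmentFirst_of_le D E (by omega) hl, LinearMap.map_sub₂,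
          h.orthogonal 1 (l - 1) le_rfl (by omega) (by omega) (by omega) (by omega),
          hE' _ (by omega) (by omega), sub_zero]
      · rw [augmentFirst_two, augmentFirst_last D E (by omega), map_sub, LinearMap.map_sub₂,
          LinearMap.map_sub₂, hB.eq (D 1) (D n), h.wrap, hE 1 le_rfl (by omega),
          hE' n (by omega) le_rfl, hEE]
        ring
    · obtain hl | rfl : l ≤ n ∨ l = n + 1 := by omega
      · rw [augmentFirst_of_le D E hk3 (by omega), augmentFirst_of_le D E (by omega) hl]
        exact h.orthogonal _ _ (by omega) (by omega) (by omega) (by omega) (by omega)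
      · rw [augmentFirst_of_le D E hk3 (by omega), augmentFirst_last D E (by omega), map_sub,
          hE _ (by omega) (by omega), sub_zero]
        exact h.orthogonal _ _ (by omega) (by omega) le_rfl (by omega) (by omega)
  · rw [sum_augmentFirst D E hn, h.sum_eq, neg_add, sub_eq_add_neg]

section AugmentPenultimate

variable (D : ℕ → V) {n : ℕ} (E : V)

theorem augmentPenultimate_of_lt {k : ℕ} (hk : k < n - 1) :
    augmentPenultimate D n E k = D k := by
  simp only [augmentPenultimate]; split_ifs <;> first | rfl | omega

theorem augmentPenultimate_pred : augmentPenultimate D n E (n - 1) = D (n - 1) - E := if_pos rfl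

theorem augmentPenultimate_self (hn : 1 ≤ n) : augmentPenultimate D n E n = E := by
  simp only [augmentPenultimate]; split_ifs <;> first | rfl | omega

theorem augmentPenultimate_succ (hn : 1 ≤ n) :
    augmentPenultimate D n E (n + 1) = D n - E := by
  simp only [augmentPenultimate]; split_ifs <;> first | rfl | omega

theorem sum_augmentPenultimate (hn : 3 ≤ n) :
    ∑ k ∈ Icc 1 (n + 1), augmentPenultimate D n E k = ∑ k ∈ Icc 1 n, D k - E := by
  obtain ⟨m, rfl⟩ : ∃ m, n = m + 3 := ⟨n - 3, by omega⟩
  have hinit : ∀ k ∈ range (m + 1), augmentPenultimate D (m + 3) E (k + 1) = D (k + 1) :=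
    fun k hk => augmentPenultimate_of_lt D E (by rw [mem_range] at hk; omega)
  have hpred : augmentPenultimate D (m + 3) E (m + 1 + 1) = D (m + 1 + 1) - E :=
    augmentPenultimate_pred D E
  conv_lhs =>
    rw [sum_Icc_one_eq_sum_range, sum_range_succ, sum_range_succ, sum_range_succ,
      sum_congr rfl hinit, hpred, augmentPenultimate_self D E (by omega),
      augmentPenultimate_succ D E (by omega)]
  conv_rhs => rw [sum_Icc_one_eq_sum_range, sum_range_succ, sum_range_succ]
  abel

end AugmentPenultimate

theorem IsToricSystem.augmentPenultimate (h : IsToricSystem B κ n D) (hB : B.IsSymm)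
    (hn : 3 ≤ n) (hE : ∀ k, 1 ≤ k → k ≤ n → B (D k) E = 0) (hEE : B E E = -1) :
    IsToricSystem B (κ + E) (n + 1) (augmentPenultimate D n E) := by
  have hE' : ∀ k, 1 ≤ k → k ≤ n → B E (D k) = 0 := fun k hk hkn => by
    rw [hB.eq, hE k hk hkn]
  refine ⟨fun k hk hkn => ?_, ?_, fun k l hk hkl hln hadj hwrap => ?_, ?_⟩
  · obtain hkn' | rfl | rfl | hkn' : k + 1 < n - 1 ∨ k = n - 2 ∨ k = n - 1 ∨ k = n := by omega
    · rw [augmentPenultimate_of_lt D E (by omega), augmentPenultimate_of_lt D E hkn']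
      exact h.adjacent k hk (by omega)
    · rw [augmentPenultimate_of_lt D E (by omega), show n - 2 + 1 = n - 1 by omega,
        augmentPenultimate_pred, map_sub, hE _ (by omega) (by omega), sub_zero]
      simpa [show n - 2 + 1 = n - 1 by omega] using h.adjacent (n - 2) (by omega) (by omega)
    · rw [augmentPenultimate_pred, show n - 1 + 1 = n by omega,
        augmentPenultimate_self D E (by omega), LinearMap.map_sub₂, hE _ (by omega) (by omega),
        hEE, zero_sub, neg_neg]
    · rw [hkn', augmentPenultimate_self D E (by omega),
        augmentPenultimate_succ D E (by omega), map_sub, hE' n (by omega) le_rfl, hEE, zero_sub,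
        neg_neg]
  · rw [augmentPenultimate_succ D E (by omega), augmentPenultimate_of_lt D E (by omega),
      LinearMap.map_sub₂, h.wrap, hE' 1 le_rfl (by omega), sub_zero]
  · obtain hl | rfl | rfl | rfl : l < n - 1 ∨ l = n - 1 ∨ l = n ∨ l = n + 1 := by omega
    · rw [augmentPenultimate_of_lt D E (by omega), augmentPenultimate_of_lt D E hl]
      exact h.orthogonal k l hk hkl (by omega) hadj (by omega)
    · rw [augmentPenultimate_of_lt D E hkl, augmentPenultimate_pred, map_sub,
        hE _ (by omega) (by omega), sub_zero]
      exact h.orthogonal k (n - 1) hk hkl (by omega) hadj (by omega)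
    · rw [augmentPenultimate_of_lt D E (by omega), augmentPenultimate_self D E (by omega),
        hE _ (by omega) (by omega)]
    · obtain hk' | rfl : k < n - 1 ∨ k = n - 1 := by omega
      · rw [augmentPenultimate_of_lt D E hk', augmentPenultimate_succ D E (by omega), map_sub,
          hE _ (by omega) (by omega), sub_zero]
        exact h.orthogonal k n hk (by omega) le_rfl (by omega) (by omega)
      · rw [augmentPenultimate_pred, augmentPenultimate_succ D E (by omega), map_sub,
          LinearMap.map_sub₂, LinearMap.map_sub₂, hE _ (by omega) (by omega),
          hE' n (by omega) le_rfl, hEE]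
        have hlast := h.adjacent (n - 1) (by omega) (by omega)
        rw [Nat.sub_add_cancel (by omega)] at hlast
        rw [hlast]
        ring
  · rw [sum_augmentPenultimate D E hn, h.sum_eq, neg_add, sub_eq_add_neg]

end ToricSystem

section Lattice

variable (a : ℤ) (t : ℕ)

theorem form_succ (x y : ℕ → ℤ) :
    form a (t + 1) x y = form a t x y - x (t + 2) * y (t + 2) := by
  simp only [form, sum_Icc_succ_top (show 2 ≤ t + 1 + 1 by omega)]
  ring

theorem form_R_succ (x : ℕ → ℤ) : form a (t + 1) x (R (t + 1)) = -x (t + 2) := by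
  simp [form, R, e]

def formBilin : BilinForm ℤ (ℕ → ℤ) :=
  LinearMap.mk₂ ℤ (form a t)
    (fun x y z => by simp only [form, Pi.add_apply, add_mul, sum_add_distrib]; ring)
    (fun c x y => by simp only [form, Pi.smul_apply, smul_eq_mul, mul_sub, mul_sum]; ring_nf)
    (fun x y z => by simp only [form, Pi.add_apply, mul_add, sum_add_distrib]; ring)
    (fun c x y => by simp only [form, Pi.smul_apply, smul_eq_mul, mul_sub, mul_sum]; ring_nf)

@[simp] theorem formBilin_apply (x y : ℕ → ℤ) : formBilin a t x y = form a t x y := rfl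

theorem formBilin_isSymm : (formBilin a t).IsSymm :=
  ⟨fun x y => by simp only [formBilin_apply, form, mul_comm (x _) (y _)]; ring⟩

theorem formBilin_succ_R_R : formBilin a (t + 1) (R (t + 1)) (R (t + 1)) = -1 := by
  rw [formBilin_apply, form_R_succ]
  simp [R, e]

theorem K_succ : K a (t + 1) = K a t + R (t + 1) := by
  rw [K, K, sum_Icc_succ_top (by omega)]
  abel

end Lattice

section Tuple

variable (a s : ℤ) {t r : ℕ}

theorem A_last : A a s t r (t + 4) = (-(a + s)) • P + Q - ∑ i ∈ Icc 1 t, R i := if_pos rfl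

theorem A_middle (hr : r ≤ t) : A a s t r (r + 2) = s • P + Q := by
  rw [A, if_neg (by omega), if_pos rfl]

theorem A_of_lt_middle {k : ℕ} (hk : k < r + 2) (hr : r ≤ t) :
    A a s t r k = if r = 0 then P else if k = 1 then R r
      else if k ≤ r then R (r - k + 1) - R (r - k + 2) else P - R 1 := by
  rw [A, if_neg (by omega), if_neg (by omega), if_pos hk]

theorem A_of_middle_lt {k : ℕ} (hk : r + 2 < k) (hkt : k < t + 4) :
    A a s t r k = if r = t then P else if k = r + 3 then P - R (r + 1)
      else if k ≤ t + 2 then R (k - 3) - R (k - 2) else R t := by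
  rw [A, if_neg (by omega), if_neg (by omega), if_neg (by omega)]

theorem A_apply_add_two_eq_zero {k : ℕ} (hr : r ≤ t) (hk : 1 ≤ k) :
    A a s t r k (t + 2) = 0 := by
  simp only [A]
  split_ifs <;> simp [P, Q, R, e, Finset.sum_apply] <;> omega

theorem formBilin_succ_A_R {k : ℕ} (hr : r ≤ t) (hk : 1 ≤ k) :
    formBilin a (t + 1) (A a s t r k) (R (t + 1)) = 0 := by
  rw [formBilin_apply, form_R_succ, A_apply_add_two_eq_zero a s hr hk, neg_zero]

theorem IsToricSystem.formBilin_succ {κ : ℕ → ℤ} (hr : r ≤ t)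
    (h : IsToricSystem (formBilin a t) κ (t + 4) (A a s t r)) :
    IsToricSystem (formBilin a (t + 1)) κ (t + 4) (A a s t r) :=
  h.congr (by omega) (fun _ _ _ => rfl) fun k l hk _ _ _ => by
    simp only [formBilin_apply, form_succ, A_apply_add_two_eq_zero a s hr hk, zero_mul, sub_zero]

theorem A_succ_eq_augmentPenultimate {k : ℕ} (hr : r ≤ t) (hk : 1 ≤ k) (hkt : k ≤ t + 5) :
    A a s (t + 1) r k = augmentPenultimate (A a s t r) (t + 4) (R (t + 1)) k := by
  obtain hkr | rfl | hkr | rfl | rfl | rfl :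
      k < r + 2 ∨ k = r + 2 ∨ (r + 2 < k ∧ k ≤ t + 2) ∨ k = t + 3 ∨ k = t + 4 ∨ k = t + 5 := by
    omega
  · rw [augmentPenultimate_of_lt _ _ (by omega), A_of_lt_middle a s hkr hr,
      A_of_lt_middle a s hkr (by omega)]
  · rw [augmentPenultimate_of_lt _ _ (by omega), A_middle a s hr, A_middle a s (by omega)]
  · rw [augmentPenultimate_of_lt _ _ (by omega), A_of_middle_lt a s hkr.1 (by omega),
      A_of_middle_lt a s hkr.1 (by omega)]
    simp [show r ≠ t + 1 by omega, show r ≠ t by omega, show k ≤ t + 2 from hkr.2,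
      show k ≤ t + 1 + 2 by omega]
  · rw [show t + 3 = t + 4 - 1 from rfl, augmentPenultimate_pred,
      A_of_middle_lt a s (by omega) (by omega), A_of_middle_lt a s (by omega) (by omega)]
    rcases eq_or_lt_of_le hr with rfl | hrt
    · simp
    · simp [hrt.ne, hrt.ne', show r ≠ t + 1 by omega]
  · rw [augmentPenultimate_self _ _ (by omega), A_of_middle_lt a s (by omega) (by omega),
      if_neg (by omega), if_neg (by omega), if_neg (by omega)]
  · rw [augmentPenultimate_succ _ _ (by omega), show t + 5 = t + 1 + 4 from rfl, A_last, A_last,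
      sum_Icc_succ_top (by omega)]
    abel

theorem A_succ_succ_eq_augmentFirst {k : ℕ} (hk : 1 ≤ k) (hkr : k ≤ r + 5) :
    A a s (r + 1) (r + 1) k = augmentFirst (A a s r r) (r + 4) (R (r + 1)) k := by
  obtain rfl | rfl | hkr | rfl | rfl | rfl :
      k = 1 ∨ k = 2 ∨ (3 ≤ k ∧ k ≤ r + 2) ∨ k = r + 3 ∨ k = r + 4 ∨ k = r + 5 := by
    omega
  · rw [augmentFirst_one, A_of_lt_middle a s (by omega) le_rfl, if_neg (by omega), if_pos rfl]
  · rw [augmentFirst_two, A_of_lt_middle a s (by omega) le_rfl,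
      A_of_lt_middle a s (by omega) le_rfl]
    rcases Nat.eq_zero_or_pos r with rfl | hr
    · simp
    · simp only [if_neg (show r + 1 ≠ 0 by omega), if_neg (show r ≠ 0 by omega),
        if_neg (show (2 : ℕ) ≠ 1 by omega), if_pos (show 2 ≤ r + 1 by omega), if_true,
        show r + 1 - 2 + 1 = r by omega, show r + 1 - 2 + 2 = r + 1 by omega]
  · rw [augmentFirst_of_le _ _ hkr.1 (by omega), A_of_lt_middle a s (by omega) le_rfl,
      A_of_lt_middle a s (by omega) le_rfl]
    simp only [if_neg (show r + 1 ≠ 0 by omega), if_neg (show r ≠ 0 by omega),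
      if_neg (show k ≠ 1 by omega), if_neg (show k - 1 ≠ 1 by omega),
      show k - 1 ≤ r ↔ k ≤ r + 1 by omega, show r - (k - 1) = r + 1 - k by omega]
  · rw [augmentFirst_of_le _ _ (by omega) (by omega), show r + 3 - 1 = r + 2 from rfl,
      A_middle a s le_rfl, A_middle a s le_rfl]
  · rw [augmentFirst_of_le _ _ (by omega) le_rfl, show r + 4 - 1 = r + 3 from rfl,
      A_of_middle_lt a s (by omega) (by omega), A_of_middle_lt a s (by omega) (by omega),
      if_pos rfl, if_pos rfl]
  · rw [augmentFirst_last _ _ (by omega), show r + 5 = r + 1 + 4 from rfl, A_last, A_last,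
      sum_Icc_succ_top (by omega)]
    abel

theorem isToricSystem_A_zero : IsToricSystem (formBilin a 0) (K a 0) 4 (A a s 0 0) := by
  refine ⟨fun k hk hkn => ?_, ?_, fun k l hk hkl hln hadj hwrap => ?_, ?_⟩
  · interval_cases k <;> simp [A, form, P, Q, e]
  · simp [A, form, P, Q, e]
  · interval_cases l <;> interval_cases k <;> simp_all [A, form, P, Q, e]
  · simp [sum_Icc_succ_top, A, K, -zsmul_eq_mul]
    module

theorem isToricSystem_A_self : ∀ r, IsToricSystem (formBilin a r) (K a r) (r + 4) (A a s r r)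
  | 0 => isToricSystem_A_zero a s
  | r + 1 => by
    have h := ((isToricSystem_A_self r).formBilin_succ a s le_rfl).augmentFirst
      (formBilin_isSymm a (r + 1)) (by omega) (fun k hk _ => formBilin_succ_A_R a s le_rfl hk)
      (formBilin_succ_R_R a r)
    rw [← K_succ] at h
    exact h.congr (by omega) (fun k hk hkr => (A_succ_succ_eq_augmentFirst a s hk hkr).symm)
      fun _ _ _ _ _ _ => rfl

theorem isToricSystem_A (hr : r ≤ t) :
    IsToricSystem (formBilin a t) (K a t) (t + 4) (A a s t r) := by
  induction t, hr using Nat.le_induction with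
  | base => exact isToricSystem_A_self a s r
  | succ t hrt ih =>
    have h := (ih.formBilin_succ a s hrt).augmentPenultimate
      (formBilin_isSymm a (t + 1)) (by omega) (fun k hk _ => formBilin_succ_A_R a s hrt hk)
      (formBilin_succ_R_R a t)
    rw [← K_succ] at h
    exact h.congr (by omega) (fun k hk hkt => (A_succ_eq_augmentPenultimate a s hrt hk hkt).symm)
      fun _ _ _ _ _ _ => rfl

end Tuple

/-- for 0 ≤ r ≤ t the above tuple of t + 4 elements is a toric
system on the Picard lattice of F_a blown up in two rounds. -/
theorem blowup_hirzebruch_toric_system (a s : ℤ) (t r : ℕ) (hr : r ≤ t) :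
    let n := t + 4
    (∀ k, 1 ≤ k → k < n → form a t (A a s t r k) (A a s t r (k + 1)) = 1) ∧
    (form a t (A a s t r n) (A a s t r 1) = 1) ∧
    (∀ k l, 1 ≤ k → k < l → l ≤ n → l ≠ k + 1 → ¬(k = 1 ∧ l = n) →
      form a t (A a s t r k) (A a s t r l) = 0) ∧
    (∑ k ∈ Finset.Icc 1 n, A a s t r k = -K a t) := by
  have h := isToricSystem_A a s hr
  exact ⟨h.adjacent, h.wrap, h.orthogonal, h.sum_eq⟩

end Stmt8
end

section
/- In the Picard lattice ℤ^{1+t} of P² blown up at t points (basis H, R_1, ..., R_t; H² = 1, R_i² = -1, other products 0), the divisors D of the toric system R_t, R_{t-1}-R_t, ..., R_1-R_2, H-R_1, H, H-ΣR_i satisfy Σ_I h-values: the sum over all intervals I ⊆ {1, ..., n-1} of χ(Σ_{i∈I} A_i) equals 9t + 15, where n = t + 3, χ(D) = 1 + (1/2)(D² - K.D), K = -3H + ΣR_i. -/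
/-
In coordinates, `χ(cH + Σ dᵢRᵢ) = 1 + c(c+3)/2 - Σ dᵢ(dᵢ-1)/2`. Hence adding `cH` to a class
without `H`-part raises `χ` by `c(c+3)/2`, while adding `R_j` to a class without `R_j`-part does
not change `χ`.

The partial sums `P_k = A_1 + ⋯ + A_k` are `0, R_t, …, R_1, H, 2H`, and the sum over `[a+1, b]`
is `P_b - P_a`. By the above, `χ(P_b - P_a) = χ(-P_a)` for `b ≤ t` and
`χ(P_b - P_a) = χ(-P_a) + c(c+3)/2` with `c = b - t` for `a ≤ t < b`, where `χ(-P_a)` is `1` for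
`a = 0` and `0` otherwise. Summing over `a < b` column by column gives `1` for each `b ≤ t`,
`1 + 2(t+1)` for `b = t+1` and `1 + 5(t+1) + χ(H)` for `b = t+2`: in total `8t + 12`.
-/

namespace Stmt16

/-- Basis vectors: index 0 is H, indices 1, ..., t are R_1, ..., R_t. -/
def e (i : ℕ) : ℕ → ℤ := fun j => if j = i then 1 else 0

/-- The intersection form: H² = 1, R_i² = -1, mixed products 0. -/
def form (t : ℕ) (x y : ℕ → ℤ) : ℤ :=
  x 0 * y 0 - ∑ i ∈ Finset.Icc 1 t, x i * y i

/-- The canonical class K = -3H + R_1 + ... + R_t. -/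
def K (t : ℕ) : ℕ → ℤ := (-3) • e 0 + ∑ i ∈ Finset.Icc 1 t, e i

/-- χ(D) = 1 + (D² - K.D)/2. -/
def chi (t : ℕ) (D : ℕ → ℤ) : ℚ :=
  1 + ((form t D D : ℚ) - (form t (K t) D : ℚ)) / 2

/-- The toric system R_t, R_{t-1} - R_t, ..., R_1 - R_2, H - R_1, H, H - ΣR_i,
indexed by k = 1, ..., t + 3. -/
def A (t : ℕ) (k : ℕ) : ℕ → ℤ :=
  if k = 1 then e t
  else if k ≤ t then e (t - k + 1) - e (t - k + 2)
  else if k = t + 1 then e 0 - e 1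
  else if k = t + 2 then e 0
  else e 0 - ∑ i ∈ Finset.Icc 1 t, e i

open Finset

lemma K_apply_zero (t : ℕ) : K t 0 = -3 := by
  simp [K, e]

lemma K_apply_of_mem {t i : ℕ} (hi : i ∈ Icc 1 t) : K t i = 1 := by
  have hi0 : i ≠ 0 := by simp at hi; omega
  simp [K, e, hi0, Finset.sum_apply, hi]

lemma chi_eq (t : ℕ) (D : ℕ → ℤ) :
    chi t D = 1 + (D 0 * (D 0 + 3) : ℚ) / 2 - ∑ i ∈ Icc 1 t, (D i * (D i - 1) : ℚ) / 2 := by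
  have hK : ∑ i ∈ Icc 1 t, K t i * D i = ∑ i ∈ Icc 1 t, D i :=
    sum_congr rfl fun i hi => by rw [K_apply_of_mem hi, one_mul]
  simp only [chi, form, hK, K_apply_zero]
  push_cast
  rw [← sum_div, sum_congr rfl fun i _ => mul_sub_one ((D i : ℚ)) (D i), sum_sub_distrib]
  ring

lemma chi_smul_e_zero_add (t : ℕ) (c : ℤ) {D : ℕ → ℤ} (hD : D 0 = 0) :
    chi t (c • e 0 + D) = chi t D + (c * (c + 3) : ℚ) / 2 := by
  have hR : ∀ i ∈ Icc 1 t, (c • e 0 + D) i = D i := fun i hi => by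
    have : i ≠ 0 := by simp at hi; omega
    simp [e, this]
  rw [chi_eq, chi_eq, sum_congr rfl fun i hi => by rw [hR i hi]]
  simp only [Pi.add_apply, Pi.smul_apply, e, if_pos, hD, smul_eq_mul, mul_one, add_zero]
  push_cast
  ring

lemma chi_e_add {t j : ℕ} (hj : j ∈ Icc 1 t) {D : ℕ → ℤ} (hD : D j = 0) :
    chi t (e j + D) = chi t D := by
  have hj0 : j ≠ 0 := by simp at hj; omega
  have hR : ∀ i ∈ Icc 1 t, ((e j + D) i * ((e j + D) i - 1) : ℚ) = D i * (D i - 1) :=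
    fun i _ => by by_cases h : i = j <;> simp [e, h, hD]
  rw [chi_eq, chi_eq, sum_congr rfl fun i hi => by rw [hR i hi]]
  simp [e, Ne.symm hj0]

lemma chi_zero (t : ℕ) : chi t 0 = 1 := by
  simp [chi, form]

lemma chi_neg_e {t i : ℕ} (hi : i ∈ Icc 1 t) : chi t (-e i) = 0 := by
  have hi0 : i ≠ 0 := by simp at hi; omega
  rw [chi_eq, sum_eq_single i (fun x _ hx => by simp [e, hx]) (fun h => absurd hi h)]
  simp [e, Ne.symm hi0]

def partialSum (t k : ℕ) : ℕ → ℤ :=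
  if k = 0 then 0 else if k ≤ t then e (t + 1 - k) else ((k - t : ℕ) : ℤ) • e 0

lemma A_eq_partialSum_sub {t k : ℕ} (hk : k ∈ Icc 1 (t + 2)) :
    A t k = partialSum t k - partialSum t (k - 1) := by
  simp only [mem_Icc] at hk
  unfold A partialSum
  rcases (by omega : k = 1 ∨ (2 ≤ k ∧ k ≤ t) ∨ (k = t + 1 ∧ 1 ≤ t) ∨ k = t + 2)
    with rfl | h | ⟨rfl, ht⟩ | rfl
  · rcases Nat.eq_zero_or_pos t with rfl | ht
    · simp
    · simp [Nat.one_le_iff_ne_zero.mp ht]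
  · rw [if_neg (by omega), if_pos h.2, if_neg (by omega), if_pos h.2, if_neg (by omega),
      if_pos (by omega)]
    congr 2 <;> omega
  · simp [Nat.one_le_iff_ne_zero.mp ht]
  · simp [two_mul]

lemma sum_A_Icc {t a b : ℕ} (ha : 1 ≤ a) (hab : a ≤ b) (hb : b ≤ t + 2) :
    ∑ k ∈ Icc a b, A t k = partialSum t b - partialSum t (a - 1) := by
  rw [sum_congr rfl fun k hk => A_eq_partialSum_sub (t := t) (k := k) (by simp at hk ⊢; omega)]
  simpa using sum_Icc_sub hab (fun k => partialSum t (k - 1))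

lemma partialSum_of_le {t k : ℕ} (hk : k ∈ Icc 1 t) : partialSum t k = e (t + 1 - k) := by
  simp only [mem_Icc] at hk
  simp [partialSum, hk.2, Nat.one_le_iff_ne_zero.mp hk.1]

lemma partialSum_of_lt {t k : ℕ} (hk : t < k) : partialSum t k = ((k - t : ℕ) : ℤ) • e 0 := by
  simp [partialSum, Nat.not_le.mpr hk, Nat.ne_zero_of_lt hk]

lemma neg_partialSum_apply_zero {t a : ℕ} (ha : a ≤ t) : (-partialSum t a) 0 = 0 := by
  unfold partialSum
  split_ifs <;> simp [e]
  omega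

lemma chi_neg_partialSum {t a : ℕ} (ha : a ≤ t) :
    chi t (-partialSum t a) = if a = 0 then 1 else 0 := by
  rcases Nat.eq_zero_or_pos a with rfl | ha0
  · simp [partialSum, chi_zero]
  · rw [partialSum_of_le (by simp; omega), chi_neg_e (by simp; omega), if_neg ha0.ne']

lemma sum_range_chi_neg_partialSum {t b : ℕ} (hb : b ∈ Icc 1 (t + 1)) :
    ∑ a ∈ range b, chi t (-partialSum t a) = 1 := by
  simp only [mem_Icc] at hb
  rw [sum_congr rfl fun a ha => chi_neg_partialSum (by simp at ha; omega), sum_ite_eq']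
  rw [if_pos (mem_range.mpr (by omega))]

lemma chi_partialSum_sub_of_le {t a b : ℕ} (hab : a < b) (hb : b ∈ Icc 1 t) :
    chi t (partialSum t b - partialSum t a) = chi t (-partialSum t a) := by
  simp only [mem_Icc] at hb
  rw [partialSum_of_le (by simp; omega), sub_eq_add_neg, chi_e_add (by simp; omega)]
  unfold partialSum
  split_ifs <;> simp [e] <;> omega

lemma chi_partialSum_sub_of_lt {t a b : ℕ} (ha : a ≤ t) (hb : t < b) :
    chi t (partialSum t b - partialSum t a)
      = chi t (-partialSum t a) + ((b - t : ℕ) * ((b - t : ℕ) + 3) : ℚ) / 2 := by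
  rw [partialSum_of_lt hb, sub_eq_add_neg, chi_smul_e_zero_add t _ (neg_partialSum_apply_zero ha)]
  push_cast
  rfl

lemma sum_range_chi_partialSum_sub_of_le {t b : ℕ} (hb : b ∈ Icc 1 t) :
    ∑ a ∈ range b, chi t (partialSum t b - partialSum t a) = 1 := by
  rw [sum_congr rfl fun a ha => chi_partialSum_sub_of_le (mem_range.mp ha) hb]
  exact sum_range_chi_neg_partialSum (by simp at hb ⊢; omega)

lemma sum_range_chi_partialSum_sub_of_lt {t b : ℕ} (hb : t < b) :
    ∑ a ∈ range (t + 1), chi t (partialSum t b - partialSum t a)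
      = 1 + (t + 1) * ((b - t : ℕ) * ((b - t : ℕ) + 3) : ℚ) / 2 := by
  rw [sum_congr rfl fun a ha => chi_partialSum_sub_of_lt (by simp at ha; omega) hb,
    sum_add_distrib, sum_range_chi_neg_partialSum (by simp), sum_const, card_range, nsmul_eq_mul]
  push_cast
  ring

lemma chi_e_zero (t : ℕ) : chi t (e 0) = 3 := by
  have h := chi_smul_e_zero_add t 1 (D := 0) rfl
  rw [one_smul, add_zero, chi_zero] at h
  rw [h]
  norm_num

lemma partialSum_add_two_sub (t : ℕ) : partialSum t (t + 2) - partialSum t (t + 1) = e 0 := by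
  simpa [A] using (A_eq_partialSum_sub (t := t) (k := t + 2) (by simp)).symm

lemma sum_filter_le_Icc_product {M : Type*} [AddCommMonoid M] (m : ℕ) (f : ℕ → ℕ → M) :
    ∑ p ∈ (Icc 1 m ×ˢ Icc 1 m).filter (fun p => p.1 ≤ p.2), f p.1 p.2
      = ∑ b ∈ Icc 1 m, ∑ a ∈ range b, f (a + 1) b := by
  rw [sum_filter, sum_product_right]
  refine sum_congr rfl fun b hb => ?_
  rw [← sum_filter, range_eq_Ico, sum_Ico_add' (f · b) 0 b 1]
  congr 1
  ext a
  simp only [mem_filter, mem_Icc, mem_Ico, zero_add] at hb ⊢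
  omega

theorem interval_chi_sum_general (t : ℕ) :
    let n := t + 3
    (∑ p ∈ (Finset.Icc 1 (n - 1) ×ˢ Finset.Icc 1 (n - 1)).filter
        (fun p => p.1 ≤ p.2),
      chi t (∑ i ∈ Finset.Icc p.1 p.2, A t i)) + ((t : ℚ) + 3)
      = 9 * (t : ℚ) + 15 := by
  intro n
  rw [show n - 1 = t + 2 from rfl, sum_filter_le_Icc_product (t + 2)
    (fun a b => chi t (∑ i ∈ Icc a b, A t i))]
  have hinterval : ∀ b ∈ Icc 1 (t + 2), ∀ a ∈ range b, chi t (∑ i ∈ Icc (a + 1) b, A t i)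
      = chi t (partialSum t b - partialSum t a) := fun b hb a ha => by
    simp only [mem_Icc, mem_range] at hb ha
    rw [sum_A_Icc (by omega) ha hb.2, Nat.add_one_sub_one]
  rw [sum_congr rfl fun b hb => sum_congr rfl (hinterval b hb),
    sum_Icc_succ_top (by omega), sum_Icc_succ_top (by omega)]
  simp only [add_assoc, Nat.reduceAdd]
  rw [sum_congr rfl fun b hb => sum_range_chi_partialSum_sub_of_le hb,
    sum_range_chi_partialSum_sub_of_lt (by omega), sum_range_succ,
    sum_range_chi_partialSum_sub_of_lt (by omega), partialSum_add_two_sub, chi_e_zero,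
    sum_const, Nat.card_Icc]
  simp only [Nat.add_sub_cancel, Nat.add_sub_cancel_left, nsmul_eq_mul]
  push_cast
  ring

/-- with n = t + 3, the sum over all nonempty intervals
I ⊆ {1, ..., n-1} of χ(Σ_{i ∈ I} A_i), plus t + 3 (for the idempotents),
equals 9t + 15. -/
theorem interval_chi_sum (t : ℕ) (ht : 1 ≤ t) :
    let n := t + 3
    (∑ p ∈ (Finset.Icc 1 (n - 1) ×ˢ Finset.Icc 1 (n - 1)).filter
        (fun p => p.1 ≤ p.2),
      chi t (∑ i ∈ Finset.Icc p.1 p.2, A t i)) + ((t : ℚ) + 3)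
      = 9 * (t : ℚ) + 15 :=
  interval_chi_sum_general t

end Stmt16
end

section
/- Let l_1, ..., l_n ∈ ℤ² be defined from a toric system A_1, ..., A_n in a lattice L of rank n-2 as the images of the standard basis of ℤ^n under the cokernel map of D ↦ (A_1.D, ..., A_n.D), where this map is injective with image a rank-(n-2) direct summand. Then for each i (cyclically), (l_i, l_{i+1}) is a basis of ℤ². -/
/-!
Each `A j` pairs to `1` with its two neighbours and to `0` with every other `A k`, so the
column `(A k . A j)_k` of the map `D ↦ (A k . D)_k` at `D = A j` is
`e (j-1) + (A j . A j) e j + e (j+1)`. Its image in the cokernel vanishes, which gives the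
three-term recurrence `l (j-1) + (A j . A j) l j + l (j+1) = 0`. Hence every `l j` lies in the
span of any two consecutive ones; since the `l j` generate `ℤ²`, so does each pair
`(l i, l (i+1))`, and a spanning pair of `ℤ²` has unit determinant.
-/

open Submodule

theorem isUnit_det_of_span_pair_eq_top {u v : ℤ × ℤ} (h : span ℤ {u, v} = ⊤) :
    IsUnit (u.1 * v.2 - u.2 * v.1) := by
  obtain ⟨a, b, hab⟩ := mem_span_pair.mp (h ▸ mem_top : ((1, 0) : ℤ × ℤ) ∈ span ℤ {u, v})
  obtain ⟨c, d, hcd⟩ := mem_span_pair.mp (h ▸ mem_top : ((0, 1) : ℤ × ℤ) ∈ span ℤ {u, v})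
  simp only [Prod.ext_iff, Prod.fst_add, Prod.snd_add, Prod.smul_fst, Prod.smul_snd,
    smul_eq_mul] at hab hcd
  refine IsUnit.of_mul_eq_one (a * d - b * c) ?_
  calc (u.1 * v.2 - u.2 * v.1) * (a * d - b * c)
      = (a * u.1 + b * v.1) * (c * u.2 + d * v.2)
        - (a * u.2 + b * v.2) * (c * u.1 + d * v.1) := by ring
    _ = 1 := by rw [hab.1, hab.2, hcd.1, hcd.2]; ring

theorem span_range_comp_single_eq_top {R M ι : Type*} [CommSemiring R] [AddCommMonoid M]
    [Module R M] [Finite ι] [DecidableEq ι] {f : (ι → R) →ₗ[R] M} (hf : Function.Surjective f) :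
    span R (Set.range fun i ↦ f (Pi.single i 1)) = ⊤ := by
  rw [← LinearMap.range_eq_top.2 hf, LinearMap.range_eq_map, ← (Pi.basisFun R ι).span_eq,
    map_span, ← Set.range_comp]
  simp only [Function.comp_def, Pi.basisFun_apply]

namespace Fin

variable {n : ℕ} [NeZero n]

theorem add_one_add_one_eq_self_of_le_two (h : n ≤ 2) (j : Fin n) : j + 1 + 1 = j := by
  have := NeZero.pos n
  rw [add_assoc, add_eq_left, Fin.ext_iff, Fin.val_add, Fin.val_one', Fin.val_zero]
  interval_cases n <;> rfl

theorem add_one_ne_self_of_three_le (h : 3 ≤ n) (j : Fin n) : j + 1 ≠ j := by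
  rw [Ne, add_eq_left, Fin.ext_iff, Fin.val_one', Fin.val_zero, Nat.one_mod_eq_one.2 (by omega)]
  exact one_ne_zero

theorem add_one_add_one_ne_self_of_three_le (h : 3 ≤ n) (j : Fin n) : j + 1 + 1 ≠ j := by
  rw [Ne, add_assoc, add_eq_left, Fin.ext_iff, Fin.val_add, Fin.val_one',
    Nat.one_mod_eq_one.2 (by omega), Nat.mod_eq_of_lt h, Fin.val_zero]
  exact two_ne_zero

theorem mem_span_pair_of_add_one_add_one_mem {R M : Type*} [Semiring R] [AddCommMonoid M]
    [Module R M] {v : Fin n → M} (hv : ∀ j, v (j + 1 + 1) ∈ span R {v j, v (j + 1)})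
    (i j : Fin n) : v j ∈ span R {v i, v (i + 1)} := by
  set S := span R {v i, v (i + 1)}
  open Fin.NatCast in
  have hstep : ∀ k : ℕ, v (i + k) ∈ S ∧ v (i + k + 1) ∈ S := by
    intro k
    induction k with
    | zero => simpa using ⟨subset_span (by simp), subset_span (by simp)⟩
    | succ k ih =>
      rw [Nat.cast_succ, ← add_assoc]
      refine ⟨ih.2, span_le.2 ?_ (hv _)⟩
      simpa [Set.insert_subset_iff] using ih
  open Fin.NatCast in
  simpa using (hstep (j - i).val).1

end Fin

section ToricSystem

variable {L : Type*} [AddCommGroup L] {n : ℕ} [NeZero n] {B : L →+ L →+ ℤ} {A : Fin n → L}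

theorem toric_column_eq (h3 : 3 ≤ n) (hsym : ∀ x y, B x y = B y x)
    (hadj : ∀ i, B (A i) (A (i + 1)) = 1)
    (horth : ∀ i j : Fin n, j ≠ i → j ≠ i + 1 → i ≠ j + 1 → B (A i) (A j) = 0) (j : Fin n) :
    (fun k ↦ B (A k) (A (j + 1))) =
      Pi.single j 1 + B (A (j + 1)) (A (j + 1)) • Pi.single (j + 1) 1 + Pi.single (j + 1 + 1) 1 := by
  have h01 := (Fin.add_one_ne_self_of_three_le h3 j).symm
  have h12 := (Fin.add_one_ne_self_of_three_le h3 (j + 1)).symm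
  have h02 := (Fin.add_one_add_one_ne_self_of_three_le h3 j).symm
  ext k
  simp only [Pi.add_apply, Pi.smul_apply, Pi.single_apply, smul_eq_mul]
  by_cases hk0 : k = j
  · subst hk0; simp [hadj, h01, h02]
  by_cases hk1 : k = j + 1
  · subst hk1; simp [h01.symm, h12]
  by_cases hk2 : k = j + 1 + 1
  · subst hk2; rw [hsym, hadj]; simp [h02.symm, h12.symm]
  simp [horth k (j + 1) (Ne.symm hk1) (fun h ↦ hk0 (add_right_cancel h).symm) hk2, hk0, hk1, hk2]

end ToricSystem

theorem gale_dual_consecutive_basis_general (L : Type*) [AddCommGroup L]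
    (n : ℕ) [NeZero n]
    (B : L →+ L →+ ℤ) (hsym : ∀ x y, B x y = B y x)
    (A : Fin n → L)
    (hadj : ∀ i, B (A i) (A (i + 1)) = 1)
    (horth : ∀ i j : Fin n, j ≠ i → j ≠ i + 1 → i ≠ j + 1 → B (A i) (A j) = 0)
    (φ : L →+ (Fin n → ℤ)) (hφ : ∀ D i, φ D i = B (A i) D)
    (π : (Fin n → ℤ) →+ ℤ × ℤ) (hsurj : Function.Surjective π)
    (hexact : ∀ x, π x = 0 ↔ ∃ D, φ D = x)
    (l : Fin n → ℤ × ℤ) (hl : ∀ i, l i = π (Pi.single i 1)) :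
    ∀ i, IsUnit ((l i).1 * (l (i + 1)).2 - (l i).2 * (l (i + 1)).1) := by
  have hspan : span ℤ (Set.range l) = ⊤ := by
    rw [show l = _ from funext hl]
    exact span_range_comp_single_eq_top (f := π.toIntLinearMap) hsurj
  have hrec : ∀ j, l (j + 1 + 1) ∈ span ℤ {l j, l (j + 1)} := by
    intro j
    by_cases h3 : 3 ≤ n
    · have hrel : π (φ (A (j + 1))) = 0 := (hexact _).2 ⟨_, rfl⟩
      have hcol : φ (A (j + 1)) = _ := (funext (hφ _)).trans (toric_column_eq h3 hsym hadj horth j)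
      rw [hcol, map_add, map_add, map_zsmul, ← hl, ← hl, ← hl] at hrel
      rw [eq_neg_of_add_eq_zero_right hrel]
      exact neg_mem (add_mem (subset_span (by simp)) (smul_mem _ _ (subset_span (by simp))))
    · rw [Fin.add_one_add_one_eq_self_of_le_two (by omega)]
      exact subset_span (by simp)
  intro i
  refine isUnit_det_of_span_pair_eq_top (eq_top_iff.2 (hspan ▸ span_le.2 ?_))
  rintro _ ⟨j, rfl⟩
  exact Fin.mem_span_pair_of_add_one_add_one_mem hrec i j

/-- Let A_1, ..., A_n be a toric system on a lattice L of rank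
n - 2, such that the map L → ℤⁿ, D ↦ (A_i.D)_i, is injective with cokernel ℤ²
(expressed via a surjection π : ℤⁿ → ℤ² whose kernel is exactly the image).
Then the images l_i = π(standard basis) satisfy: each consecutive pair
(l_i, l_{i+1}) (cyclically) is a basis of ℤ², i.e. has unit determinant. -/
theorem gale_dual_consecutive_basis (L : Type*) [AddCommGroup L] [Module.Free ℤ L]
    (n : ℕ) [NeZero n] (hrank : Module.finrank ℤ L = n - 2)
    (B : L →+ L →+ ℤ) (hsym : ∀ x y, B x y = B y x) (K : L)
    (A : Fin n → L)
    (hadj : ∀ i, B (A i) (A (i + 1)) = 1)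
    (horth : ∀ i j : Fin n, j ≠ i → j ≠ i + 1 → i ≠ j + 1 → B (A i) (A j) = 0)
    (hsum : ∑ i, A i = -K)
    (φ : L →+ (Fin n → ℤ)) (hφ : ∀ D i, φ D i = B (A i) D)
    (hinj : Function.Injective φ)
    (π : (Fin n → ℤ) →+ ℤ × ℤ) (hsurj : Function.Surjective π)
    (hexact : ∀ x, π x = 0 ↔ ∃ D, φ D = x)
    (l : Fin n → ℤ × ℤ) (hl : ∀ i, l i = π (Pi.single i 1)) :
    ∀ i, IsUnit ((l i).1 * (l (i + 1)).2 - (l i).2 * (l (i + 1)).1) :=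
  gale_dual_consecutive_basis_general L n B hsym A hadj horth φ hφ π hsurj hexact l hl
end

section
/- Let A_1, A_2, A_3, A_4 be a toric system on a rank-2 lattice L with basis P, Q, P² = 0, P.Q = 1, Q² = a, K = (a-2)P - 2Q, such that A_1 = P and the Q-coefficient of A_2 is +1. Then there exists s ∈ ℤ such that the toric system is exactly (P, sP + Q, P, -(a+s)P + Q), i.e. A_2 = sP + Q, A_3 = P, A_4 = -(a+s)P + Q. -/
/-- Intersection form of the Hirzebruch surface F_a on ℤ² with basis P = (1,0),
Q = (0,1): P² = 0, P.Q = 1, Q² = a. -/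
def hirzebruchForm (a : ℤ) (x y : ℤ × ℤ) : ℤ :=
  x.1 * y.2 + x.2 * y.1 + a * x.2 * y.2

/-- a length-4 toric system on the Picard lattice of F_a with
A_1 = P whose second member has Q-coefficient 1 is exactly
(P, sP + Q, P, -(a+s)P + Q) for some s ∈ ℤ. -/
theorem hirzebruch_toric_system_classification (a : ℤ)
    (A1 A2 A3 A4 : ℤ × ℤ)
    (B : (ℤ × ℤ) → (ℤ × ℤ) → ℤ) (hB : B = hirzebruchForm a)
    (K : ℤ × ℤ) (hK : K = (a - 2, -2))
    (h12 : B A1 A2 = 1) (h23 : B A2 A3 = 1) (h34 : B A3 A4 = 1)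
    (h41 : B A4 A1 = 1) (h13 : B A1 A3 = 0) (h24 : B A2 A4 = 0)
    (hsum : A1 + A2 + A3 + A4 = -K)
    (hA1 : A1 = (1, 0)) (hA2 : A2.2 = 1) :
    ∃ s : ℤ, A2 = (s, 1) ∧ A3 = (1, 0) ∧ A4 = (-(a + s), 1) := by
  subst hB hK hA1
  obtain ⟨s, b⟩ := A2
  obtain ⟨u, c⟩ := A3
  obtain ⟨v, d⟩ := A4
  simp only [hirzebruchForm, Prod.ext_iff, Prod.mk_add_mk, Prod.fst_add, Prod.snd_add,
    Prod.neg_mk, Prod.mk.injEq] at *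
  refine ⟨s, ⟨rfl, hA2⟩, ?_⟩
  subst hA2
  have hc : c = 0 := by linarith
  subst hc
  have hd : d = 1 := by linarith
  subst hd
  simp only [mul_zero, zero_mul, mul_one, one_mul, add_zero, zero_add] at *
  exact ⟨⟨h23, trivial⟩, by omega, trivial⟩
end
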